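/- Suppose each G_j : 𝒳 → ℝ^d and each h_j : 𝒳 → ℝ is Lipschitz continuous on 𝒳. Let θ^c ∈ Θ, r^c ∈ [0,1], and let (θ_N) ⊆ Θ, (r_N) ⊆ [0,1] with θ_N → θ^c and r_N → r^c. Then lim_{N→∞} lim_{λ↓0} 𝔻(𝔛^λ(θ_N, r_N), 𝔛(θ^c, r^c)) = 0; explicitly, for every ε > 0 there exists N₀ such that for every N ≥ N₀ there exists λ_N > 0 with 𝔻(𝔛^λ(θ_N, r_N), 𝔛(θ^c, r^c)) ≤ ε for all λ ∈ (0, λ_N]. -/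

import Mathlib

/-!
All solution sets lie in the compact set `X`, so it suffices that the solution map has a closed
graph at `(θc, rc, 0)`: a limit of solutions `x_k` is a solution. Along a subsequence the
multipliers `θ_k` converge to some `θ̄`; the variational inequality passes to the limit by
continuity of the `G_j`, and `θ̄` is still a maximizer because every point of the limit ambiguity
set is approached by points of the approximating ones.
-/

open Set Filter MeasureTheory
open scoped ENNReal

noncomputable section

/-- The probability simplex Θ in ℝⁿ. -/
def simplex (n : ℕ) : Set (Fin n → ℝ) := {θ | ∑ j, θ j = 1 ∧ ∀ j, 0 ≤ θ j}

/-- Ambiguity set `𝔹∞(c, r) ∩ Θ`.  (The norm on `Fin n → ℝ` is the sup norm.) -/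
def amb {n : ℕ} (c : Fin n → ℝ) (r : ℝ) : Set (Fin n → ℝ) :=
  {θ | ‖θ - c‖ ≤ r} ∩ simplex n

/-- Regularized lower-level objective `∑_j θ_j h_j(x) − λ‖θ‖²` (Euclidean norm squared). -/
def obj {n d : ℕ} (h : Fin n → (Fin d → ℝ) → ℝ) (lam : ℝ) (x : Fin d → ℝ)
    (θ : Fin n → ℝ) : ℝ :=
  (∑ j, θ j * h j x) - lam * ∑ j, (θ j) ^ 2

/-- Optimal value `ν^λ(x, c, r)` of the regularized lower-level problem. -/
def nuval {n d : ℕ} (h : Fin n → (Fin d → ℝ) → ℝ) (lam : ℝ) (x : Fin d → ℝ)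
    (c : Fin n → ℝ) (r : ℝ) : ℝ :=
  sSup (obj h lam x '' amb c r)

/-- Maximizer set `ϑ^λ(x, c, r)` of the regularized lower-level problem. -/
def argmaxSet {n d : ℕ} (h : Fin n → (Fin d → ℝ) → ℝ) (lam : ℝ) (x : Fin d → ℝ)
    (c : Fin n → ℝ) (r : ℝ) : Set (Fin n → ℝ) :=
  {θ ∈ amb c r | obj h lam x θ = nuval h lam x c r}

/-- Normal cone of `X` at `x` (standard inner product on ℝ^d). -/
def normalCone {d : ℕ} (X : Set (Fin d → ℝ)) (x : Fin d → ℝ) : Set (Fin d → ℝ) :=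
  {v | ∀ y ∈ X, ∑ i, v i * (y i - x i) ≤ 0}

/-- x-solution set `𝔛^λ(c, r)` of the (regularized) Bayesian DRVI. -/
def solSet {n d : ℕ} (G : Fin n → (Fin d → ℝ) → Fin d → ℝ)
    (h : Fin n → (Fin d → ℝ) → ℝ) (lam : ℝ) (X : Set (Fin d → ℝ))
    (c : Fin n → ℝ) (r : ℝ) : Set (Fin d → ℝ) :=
  {x ∈ X | ∃ θ ∈ argmaxSet h lam x c r,
      ∀ y ∈ X, 0 ≤ ∑ i, (∑ j, θ j * G j x i) * (y i - x i)}

/-- One-sided deviation `𝔻(S, T)` (the metric of the Pi type is the sup metric). -/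
def dev {α : Type*} [PseudoMetricSpace α] (S T : Set α) : ℝ :=
  sSup ((fun s => Metric.infDist s T) '' S)

/-- One-sided deviation with values in `ℝ≥0∞`. -/
def devE {α : Type*} [PseudoMetricSpace α] (S T : Set α) : ℝ≥0∞ :=
  ⨆ s ∈ S, ENNReal.ofReal (Metric.infDist s T)

/-- Lower-level growth function `ψ_x^λ` at parameters `(c, r)`
(values in `[0,∞]`; the infimum over the empty set is `⊤`). -/
def psiLow {n d : ℕ} (h : Fin n → (Fin d → ℝ) → ℝ) (lam : ℝ) (x : Fin d → ℝ)
    (c : Fin n → ℝ) (r : ℝ) (τ : ℝ) : ℝ≥0∞ :=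
  ⨅ θ ∈ {θ ∈ amb c r | τ ≤ Metric.infDist θ (argmaxSet h lam x c r)},
    ENNReal.ofReal (nuval h lam x c r - obj h lam x θ)

/-- Generalized inverse `(ψ_x^λ)⁻¹(t) = sup{τ ≥ 0 : ψ_x^λ(τ) ≤ t}`. -/
def psiLowInv {n d : ℕ} (h : Fin n → (Fin d → ℝ) → ℝ) (lam : ℝ) (x : Fin d → ℝ)
    (c : Fin n → ℝ) (r : ℝ) (t : ℝ) : ℝ≥0∞ :=
  ⨆ τ ∈ {τ : ℝ | 0 ≤ τ ∧ psiLow h lam x c r τ ≤ ENNReal.ofReal t}, ENNReal.ofReal τ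

/-- `Ψ_x^λ(η) = η + (ψ_x^λ)⁻¹(2η)`. -/
def PsiLow {n d : ℕ} (h : Fin n → (Fin d → ℝ) → ℝ) (lam : ℝ) (x : Fin d → ℝ)
    (c : Fin n → ℝ) (r : ℝ) (η : ℝ) : ℝ≥0∞ :=
  ENNReal.ofReal η + psiLowInv h lam x c r (2 * η)

/-- Residual `d(0, ∑_j θ_j G_j(x) + N_X(x))` (ℓ∞ distance). -/
def resid {n d : ℕ} (G : Fin n → (Fin d → ℝ) → Fin d → ℝ) (X : Set (Fin d → ℝ))
    (x : Fin d → ℝ) (θ : Fin n → ℝ) : ℝ :=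
  Metric.infDist (0 : Fin d → ℝ)
    ((fun w => (fun i => ∑ j, θ j * G j x i) + w) '' normalCone X x)

/-- Solution-set growth function `ψ^λ_{c,r}` (values in `[0,∞]`). -/
def psiSol {n d : ℕ} (G : Fin n → (Fin d → ℝ) → Fin d → ℝ)
    (h : Fin n → (Fin d → ℝ) → ℝ) (lam : ℝ) (X : Set (Fin d → ℝ))
    (c : Fin n → ℝ) (r : ℝ) (τ : ℝ) : ℝ≥0∞ :=
  ⨅ x ∈ {x ∈ X | τ ≤ Metric.infDist x (solSet G h lam X c r)},
    ⨅ θ ∈ argmaxSet h lam x c r, ENNReal.ofReal (resid G X x θ)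

/-- Generalized inverse `(ψ^λ_{c,r})⁻¹(t) = sup{τ ≥ 0 : ψ^λ_{c,r}(τ) ≤ t}`. -/
def psiSolInv {n d : ℕ} (G : Fin n → (Fin d → ℝ) → Fin d → ℝ)
    (h : Fin n → (Fin d → ℝ) → ℝ) (lam : ℝ) (X : Set (Fin d → ℝ))
    (c : Fin n → ℝ) (r : ℝ) (t : ℝ) : ℝ≥0∞ :=
  ⨆ τ ∈ {τ : ℝ | 0 ≤ τ ∧ psiSol G h lam X c r τ ≤ ENNReal.ofReal t}, ENNReal.ofReal τ

open Topology

theorem simplex_eq_stdSimplex (n : ℕ) : simplex n = stdSimplex ℝ (Fin n) := by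
  ext θ
  exact and_comm

theorem isCompact_amb {n : ℕ} (c : Fin n → ℝ) (r : ℝ) : IsCompact (amb c r) := by
  rw [amb, simplex_eq_stdSimplex]
  exact (isCompact_stdSimplex ℝ (Fin n)).inter_left (isClosed_le (by fun_prop) continuous_const)

theorem mem_argmaxSet_iff {n d : ℕ} {h : Fin n → (Fin d → ℝ) → ℝ} {lam : ℝ} {x : Fin d → ℝ}
    {c θ : Fin n → ℝ} {r : ℝ} :
    θ ∈ argmaxSet h lam x c r ↔ θ ∈ amb c r ∧ ∀ t ∈ amb c r, obj h lam x t ≤ obj h lam x θ := by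
  constructor
  · rintro ⟨hθ, hmax⟩
    have hbdd : BddAbove (obj h lam x '' amb c r) :=
      ((isCompact_amb c r).image (by unfold obj; fun_prop)).bddAbove
    refine ⟨hθ, fun t ht => ?_⟩
    rw [hmax]
    exact le_csSup hbdd (mem_image_of_mem _ ht)
  · rintro ⟨hθ, hmax⟩
    exact ⟨hθ, (IsGreatest.csSup_eq ⟨mem_image_of_mem _ hθ, forall_mem_image.2 hmax⟩).symm⟩

/-- Move `t` along the segment towards the new centre `c'`, just far enough to enter the new ball. -/
theorem exists_mem_amb_norm_sub_le {n : ℕ} {c c' t : Fin n → ℝ} {r r' : ℝ}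
    (hc' : c' ∈ simplex n) (hr' : 0 ≤ r') (ht : t ∈ amb c r) :
    ∃ t' ∈ amb c' r', ‖t' - t‖ ≤ |r - r'| + ‖c' - c‖ := by
  obtain ⟨htc, hts⟩ := ht
  set R := r + ‖c' - c‖
  have hdist : dist c' t ≤ R := by
    rw [dist_comm, dist_eq_norm]
    calc ‖t - c'‖ = ‖(t - c) - (c' - c)‖ := by congr 1; abel
      _ ≤ ‖t - c‖ + ‖c' - c‖ := norm_sub_le _ _
      _ ≤ R := add_le_add htc le_rfl
  by_cases hnear : R ≤ r'
  · refine ⟨t, ⟨?_, hts⟩, by simp only [sub_self, norm_zero]; positivity⟩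
    rw [mem_ofPred_eq, ← dist_eq_norm, dist_comm]
    exact hdist.trans hnear
  rw [not_le] at hnear
  have hR : 0 < R := hr'.trans_lt hnear
  set s := r' / R
  have hs : s ∈ Icc (0 : ℝ) 1 := ⟨div_nonneg hr' hR.le, (div_le_one hR).2 hnear.le⟩
  have hsR : s * R = r' := div_mul_cancel₀ _ hR.ne'
  refine ⟨AffineMap.lineMap c' t s, ⟨?_, ?_⟩, ?_⟩
  · rw [mem_ofPred_eq, ← dist_eq_norm, dist_lineMap_left, Real.norm_of_nonneg hs.1, ← hsR]
    gcongr
  · rw [simplex_eq_stdSimplex] at hc' hts ⊢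
    exact (convex_stdSimplex ℝ (Fin n)).lineMap_mem hc' hts hs
  · rw [← dist_eq_norm, dist_lineMap_right, Real.norm_of_nonneg (sub_nonneg.2 hs.2)]
    calc (1 - s) * dist c' t ≤ (1 - s) * R := by gcongr; exact sub_nonneg.2 hs.2
      _ = R - r' := by rw [sub_mul, one_mul, hsR]
      _ ≤ |r - r'| + ‖c' - c‖ := by linarith [le_abs_self (r - r')]

section Limits

variable {ι : Type*} {l : Filter ι} {n d : ℕ} {h : Fin n → (Fin d → ℝ) → ℝ}
  {lam : ι → ℝ} {lam₀ : ℝ} {x : ι → Fin d → ℝ} {x₀ : Fin d → ℝ}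
  {θ : ι → Fin n → ℝ} {θ₀ : Fin n → ℝ}

theorem tendsto_obj (hlam : Tendsto lam l (𝓝 lam₀))
    (hh : ∀ j, Tendsto (fun k => h j (x k)) l (𝓝 (h j x₀))) (hθ : Tendsto θ l (𝓝 θ₀)) :
    Tendsto (fun k => obj h (lam k) (x k) (θ k)) l (𝓝 (obj h lam₀ x₀ θ₀)) := by
  have hθj := tendsto_pi_nhds.1 hθ
  exact (tendsto_finsetSum _ fun j _ => (hθj j).mul (hh j)).sub
    (hlam.mul (tendsto_finsetSum _ fun j _ => (hθj j).pow 2))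

theorem mem_argmaxSet_of_tendsto [l.NeBot] {c : ι → Fin n → ℝ} {c₀ : Fin n → ℝ}
    {r : ι → ℝ} {r₀ : ℝ} (hlam : Tendsto lam l (𝓝 lam₀))
    (hh : ∀ j, Tendsto (fun k => h j (x k)) l (𝓝 (h j x₀)))
    (hc : Tendsto c l (𝓝 c₀)) (hr : Tendsto r l (𝓝 r₀))
    (hcs : ∀ k, c k ∈ simplex n) (hr0 : ∀ k, 0 ≤ r k) (hθ : Tendsto θ l (𝓝 θ₀))
    (hmax : ∀ k, θ k ∈ argmaxSet h (lam k) (x k) (c k) (r k)) :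
    θ₀ ∈ argmaxSet h lam₀ x₀ c₀ r₀ := by
  simp only [mem_argmaxSet_iff] at hmax ⊢
  refine ⟨⟨?_, ?_⟩, fun t ht => ?_⟩
  · exact le_of_tendsto_of_tendsto' (hθ.sub hc).norm hr fun k => (hmax k).1.1
  · rw [simplex_eq_stdSimplex]
    refine (isClosed_stdSimplex ℝ (Fin n)).mem_of_tendsto hθ (Eventually.of_forall fun k => ?_)
    rw [← simplex_eq_stdSimplex]
    exact (hmax k).1.2
  · choose T hTamb hTt using fun k => exists_mem_amb_norm_sub_le (hcs k) (hr0 k) ht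
    have hT : Tendsto T l (𝓝 t) := by
      rw [tendsto_iff_norm_sub_tendsto_zero]
      refine squeeze_zero (fun _ => norm_nonneg _) hTt ?_
      simpa using ((hr.const_sub r₀).abs).add (hc.sub_const c₀).norm
    exact le_of_tendsto_of_tendsto' (tendsto_obj hlam hh hT) (tendsto_obj hlam hh hθ)
      fun k => (hmax k).2 _ (hTamb k)

end Limits

theorem mem_solSet_of_tendsto {n d : ℕ} {G : Fin n → (Fin d → ℝ) → Fin d → ℝ}
    {h : Fin n → (Fin d → ℝ) → ℝ} {X : Set (Fin d → ℝ)} (hX : IsClosed X)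
    (hG : ∀ j, ContinuousOn (G j) X) (hh : ∀ j, ContinuousOn (h j) X)
    {lam : ℕ → ℝ} {lam₀ : ℝ} {c : ℕ → Fin n → ℝ} {c₀ : Fin n → ℝ} {r : ℕ → ℝ} {r₀ : ℝ}
    {x : ℕ → Fin d → ℝ} {x₀ : Fin d → ℝ}
    (hlam : Tendsto lam atTop (𝓝 lam₀)) (hc : Tendsto c atTop (𝓝 c₀))
    (hr : Tendsto r atTop (𝓝 r₀)) (hcs : ∀ k, c k ∈ simplex n) (hr0 : ∀ k, 0 ≤ r k)
    (hx : Tendsto x atTop (𝓝 x₀)) (hsol : ∀ k, x k ∈ solSet G h (lam k) X (c k) (r k)) :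
    x₀ ∈ solSet G h lam₀ X c₀ r₀ := by
  have hxX : ∀ k, x k ∈ X := fun k => (hsol k).1
  have hx₀ : x₀ ∈ X := hX.mem_of_tendsto hx (Eventually.of_forall hxX)
  choose θ hθ hvi using fun k => (hsol k).2
  obtain ⟨θ₀, -, φ, hφ, hθφ⟩ := (isCompact_stdSimplex ℝ (Fin n)).tendsto_subseq
    fun k => simplex_eq_stdSimplex n ▸ (hθ k).1.2
  have hxφ : Tendsto (x ∘ φ) atTop (𝓝[X] x₀) :=
    tendsto_nhdsWithin_iff.2 ⟨hx.comp hφ.tendsto_atTop, Eventually.of_forall fun k => hxX _⟩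
  have hGφ j i : Tendsto (fun k => G j (x (φ k)) i) atTop (𝓝 (G j x₀ i)) :=
    tendsto_pi_nhds.1 ((hG j x₀ hx₀).tendsto.comp hxφ) i
  refine ⟨hx₀, θ₀, ?_, fun y hy => ?_⟩
  · exact mem_argmaxSet_of_tendsto (l := atTop) (hlam.comp hφ.tendsto_atTop)
      (fun j => (hh j x₀ hx₀).tendsto.comp hxφ) (hc.comp hφ.tendsto_atTop)
      (hr.comp hφ.tendsto_atTop) (fun _ => hcs _) (fun _ => hr0 _) hθφ fun _ => hθ _
  · have hviφ : Tendsto (fun k => ∑ i, (∑ j, θ (φ k) j * G j (x (φ k)) i) * (y i - x (φ k) i))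
        atTop (𝓝 (∑ i, (∑ j, θ₀ j * G j x₀ i) * (y i - x₀ i))) :=
      tendsto_finsetSum _ fun i _ =>
        (tendsto_finsetSum _ fun j _ => (tendsto_pi_nhds.1 hθφ j).mul (hGφ j i)).mul
          (tendsto_const_nhds.sub (tendsto_pi_nhds.1 (hx.comp hφ.tendsto_atTop) i))
    exact ge_of_tendsto' hviφ fun k => hvi (φ k) y hy

/-- If the deviation stayed above `ε` along some `N → ∞`, `lam → 0`, a convergent subsequence of
the offending points would have its limit in `S`. -/
theorem exists_forall_infDist_le_of_tendsto_mem {α : Type*} [PseudoMetricSpace α] {X S : Set α}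
    (hX : IsCompact X) (F : ℕ → ℝ → Set α) (hFX : ∀ N lam, F N lam ⊆ X)
    (hF : ∀ (N : ℕ → ℕ) (lam : ℕ → ℝ) (x : ℕ → α) (x₀ : α), Tendsto N atTop atTop →
      Tendsto lam atTop (𝓝 0) → (∀ k, x k ∈ F (N k) (lam k)) → Tendsto x atTop (𝓝 x₀) →
      x₀ ∈ S)
    (ε : ℝ) (hε : 0 < ε) :
    ∃ N₀ : ℕ, ∀ N ≥ N₀, ∃ lamN : ℝ, 0 < lamN ∧
      ∀ lam : ℝ, 0 < lam → lam ≤ lamN → ∀ x ∈ F N lam, Metric.infDist x S ≤ ε := by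
  by_contra! hbad
  choose N hN hbadN using hbad
  choose lam hlam0 hlam x hxF hxS using fun k : ℕ => hbadN k (1 / (k + 1)) Nat.one_div_pos_of_nat
  obtain ⟨x₀, -, φ, hφ, hxφ⟩ := hX.tendsto_subseq fun k => hFX _ _ (hxF k)
  have hNφ : Tendsto (N ∘ φ) atTop atTop :=
    tendsto_atTop_mono (fun k => hφ.le_apply.trans (hN (φ k))) tendsto_id
  have hlamφ : Tendsto (lam ∘ φ) atTop (𝓝 0) :=
    squeeze_zero (fun k => (hlam0 (φ k)).le) (fun k => hlam (φ k))
      (tendsto_one_div_add_atTop_nhds_zero_nat.comp hφ.tendsto_atTop)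
  have hx₀ : x₀ ∈ S := hF _ _ _ _ hNφ hlamφ (fun k => hxF (φ k)) hxφ
  have hlim : ε ≤ Metric.infDist x₀ S :=
    ge_of_tendsto ((Metric.continuous_infDist_pt S).tendsto x₀ |>.comp hxφ)
      (Eventually.of_forall fun k => (hxS (φ k)).le)
  rw [Metric.infDist_zero_of_mem hx₀] at hlim
  exact hε.not_ge hlim

theorem combined_convergence_general {n d : ℕ}
    (X : Set (Fin d → ℝ)) (hXcomp : IsCompact X)
    (G : Fin n → (Fin d → ℝ) → Fin d → ℝ) (h : Fin n → (Fin d → ℝ) → ℝ)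
    (hGLip : ∀ j, ∃ LG : ℝ, ∀ x ∈ X, ∀ y ∈ X, ‖G j x - G j y‖ ≤ LG * ‖x - y‖)
    (hhLip : ∀ j, ∃ Lh : ℝ, ∀ x ∈ X, ∀ y ∈ X, |h j x - h j y| ≤ Lh * ‖x - y‖)
    (θc : Fin n → ℝ) (rc : ℝ)
    (θN : ℕ → Fin n → ℝ) (hθN : ∀ N, θN N ∈ simplex n)
    (rN : ℕ → ℝ) (hrN : ∀ N, rN N ∈ Set.Icc (0 : ℝ) 1)
    (hθconv : Tendsto θN atTop (nhds θc)) (hrconv : Tendsto rN atTop (nhds rc)) :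
    ∀ ε : ℝ, 0 < ε → ∃ N0 : ℕ, ∀ N ≥ N0, ∃ lamN : ℝ, 0 < lamN ∧
      ∀ lam : ℝ, 0 < lam → lam ≤ lamN →
        ∀ x ∈ solSet G h lam X (θN N) (rN N),
          Metric.infDist x (solSet G h 0 X θc rc) ≤ ε := by
  have hG j : ContinuousOn (G j) X := by
    obtain ⟨L, hL⟩ := hGLip j
    exact (LipschitzOnWith.of_dist_le' (K := L)
      (by simpa only [dist_eq_norm] using hL)).continuousOn
  have hh j : ContinuousOn (h j) X := by
    obtain ⟨L, hL⟩ := hhLip j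
    exact (LipschitzOnWith.of_dist_le' (K := L)
      (by simpa only [dist_eq_norm, Real.norm_eq_abs] using hL)).continuousOn
  refine exists_forall_infDist_le_of_tendsto_mem hXcomp _ (fun _ _ => sep_subset _ _)
    fun N lam x x₀ hN hlam hsol hx => ?_
  exact mem_solSet_of_tendsto hXcomp.isClosed hG hh hlam (hθconv.comp hN) (hrconv.comp hN)
    (fun _ => hθN _) (fun _ => (hrN _).1) hx hsol

/-- Theorem 3.8 (deterministic core): combined convergence of the regularized
data-driven x-solution sets as the sample size grows and the regularization vanishes. -/
theorem combined_convergence {n d : ℕ} (hn : 1 ≤ n) (hd : 1 ≤ d)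
    (X : Set (Fin d → ℝ)) (hXne : X.Nonempty) (hXcomp : IsCompact X) (hXconv : Convex ℝ X)
    (G : Fin n → (Fin d → ℝ) → Fin d → ℝ) (h : Fin n → (Fin d → ℝ) → ℝ)
    (hGLip : ∀ j, ∃ LG : ℝ, ∀ x ∈ X, ∀ y ∈ X, ‖G j x - G j y‖ ≤ LG * ‖x - y‖)
    (hhLip : ∀ j, ∃ Lh : ℝ, ∀ x ∈ X, ∀ y ∈ X, |h j x - h j y| ≤ Lh * ‖x - y‖)
    (θc : Fin n → ℝ) (hθc : θc ∈ simplex n) (rc : ℝ) (hrc : rc ∈ Set.Icc (0 : ℝ) 1)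
    (θN : ℕ → Fin n → ℝ) (hθN : ∀ N, θN N ∈ simplex n)
    (rN : ℕ → ℝ) (hrN : ∀ N, rN N ∈ Set.Icc (0 : ℝ) 1)
    (hθconv : Tendsto θN atTop (nhds θc)) (hrconv : Tendsto rN atTop (nhds rc)) :
    ∀ ε : ℝ, 0 < ε → ∃ N0 : ℕ, ∀ N ≥ N0, ∃ lamN : ℝ, 0 < lamN ∧
      ∀ lam : ℝ, 0 < lam → lam ≤ lamN →
        ∀ x ∈ solSet G h lam X (θN N) (rN N),
          Metric.infDist x (solSet G h 0 X θc rc) ≤ ε :=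
  combined_convergence_general X hXcomp G h hGLip hhLip θc rc θN hθN rN hrN hθconv hrconv
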